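/- arXiv:1004.2182 — 2 statements merged into one kernel-verified Lean document; each statement's English description precedes it below -/
import Mathlib

section
/- Let S_n = S_0 + Σ_{j=1}^n C_j be a renewal process with i.i.d. interarrival times C_j having mean μ = E[C_1] > 0 and E[C_1^p] < ∞ for some p ∈ (1,2), and let M_T be the number of renewals in (0,T]. Then there exists a constant c such that P(M_T > 2T/μ) ≤ c T^{1−p} for all T > 0. -/
open MeasureTheory ProbabilityTheory Filter Set

noncomputable section

variable {Ω : Type*} [MeasureSpace Ω]

/-- The renewal epochs `S_n = S_0 + Σ_{j=1}^n C_j`. -/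
def renewalEpoch (S0 : Ω → ℝ) (C : ℕ → Ω → ℝ) (n : ℕ) (ω : Ω) : ℝ :=
  S0 ω + ∑ j ∈ Finset.Icc 1 n, C j ω

/-- The number `M_T` of renewals in `(0, T]`. -/
def renewalCount (S0 : Ω → ℝ) (C : ℕ → Ω → ℝ) (T : ℝ) (ω : Ω) : ℕ :=
  {n : ℕ | 1 ≤ n ∧ renewalEpoch S0 C n ω ≤ T}.ncard

/-!
Instead of Burkholder's inequality, a Chernoff bound on the lower tail of `S_m` is used. For
`x ≥ 0` and `1 ≤ p ≤ 2` one has `exp (-x) ≤ 1 - x + x ^ p`, so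
`E[exp (-a C)] ≤ exp (-a μ + a ^ p E[C ^ p]) ≤ exp (-3 a μ / 4)` once `a > 0` is small enough that
`a ^ (p - 1) E[C ^ p] ≤ μ / 4`. With `m = ⌊2T/μ⌋ + 1`, the event `M_T > 2T/μ` forces
`S_m ≤ T`, whence by independence its probability is at most
`exp (a T - 3 a m μ / 4) ≤ exp (-a T / 2)`, and `exp (-x) ≤ x ^ (1 - p)` for `x > 0`.
-/

open Topology

namespace Real

theorem exp_neg_le_one_sub_add_rpow {p x : ℝ} (hp1 : 1 ≤ p) (hp2 : p ≤ 2) (hx : 0 ≤ x) :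
    exp (-x) ≤ 1 - x + x ^ p := by
  rcases le_or_gt x 1 with hx1 | hx1
  · have hsq : x ^ 2 ≤ x ^ p := by
      simpa using rpow_le_rpow_of_exponent_ge' hx hx1 (by linarith) hp2
    have hinv : exp (-x) ≤ (1 + x)⁻¹ := by
      rw [exp_neg]
      exact inv_anti₀ (by linarith) (by linarith [add_one_le_exp x])
    have hquad : (1 + x)⁻¹ ≤ 1 - x + x ^ 2 := by
      rw [inv_le_iff_one_le_mul₀ (by linarith)]
      nlinarith
    linarith
  · have hlin : x ≤ x ^ p := by
      simpa using rpow_le_rpow_of_exponent_le hx1.le hp1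
    linarith [exp_le_one_iff.mpr (neg_nonpos.mpr hx)]

theorem rpow_le_exp {x s : ℝ} (hx : 0 ≤ x) (hs0 : 0 ≤ s) (hs1 : s ≤ 1) : x ^ s ≤ exp x := by
  rcases le_or_gt x 1 with hx1 | hx1
  · exact (rpow_le_one hx hx1 hs0).trans (one_le_exp hx)
  · calc x ^ s ≤ x := by simpa using rpow_le_rpow_of_exponent_le hx1.le hs1
      _ ≤ exp x := by linarith [add_one_le_exp x]

theorem exp_neg_le_rpow_neg {x s : ℝ} (hx : 0 < x) (hs0 : 0 ≤ s) (hs1 : s ≤ 1) :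
    exp (-x) ≤ x ^ (-s) := by
  rw [exp_neg, rpow_neg hx.le]
  exact inv_anti₀ (rpow_pos_of_pos hx s) (rpow_le_exp hx.le hs0 hs1)

end Real

theorem exists_pos_rpow_mul_le {q ε : ℝ} (hq : 0 < q) (hε : 0 < ε) (K : ℝ) :
    ∃ a : ℝ, 0 < a ∧ a ^ q * K ≤ ε := by
  have hlim : Tendsto (fun a : ℝ => a ^ q * K) (𝓝[>] 0) (𝓝 0) := by
    have := ((Real.continuousAt_rpow_const 0 q (Or.inr hq.le)).tendsto.mul_const K)
    simpa [Real.zero_rpow hq.ne'] using this.mono_left nhdsWithin_le_nhds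
  exact ((hlim.eventually (ge_mem_nhds hε)).and self_mem_nhdsWithin).exists.imp
    fun a ha => ⟨ha.2, ha.1⟩

section Moments

variable {α : Type*} [MeasurableSpace α] {μ : Measure α} {X : α → ℝ} {p : ℝ}

theorem integrable_of_integrable_rpow [IsFiniteMeasure μ] (hX : AEStronglyMeasurable X μ)
    (hX0 : 0 ≤ X) (hp : 1 ≤ p) (hXp : Integrable (fun ω => X ω ^ p) μ) : Integrable X μ := by
  have hnorm : ∀ ω, ‖X ω‖ = X ω := fun ω => Real.norm_of_nonneg (hX0 ω)
  have h := integrable_norm_rpow_of_le hX zero_le_one (by linarith) hp (by simpa [hnorm] using hXp)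
  simpa [hnorm] using h

theorem integrable_exp_neg_mul_of_nonneg [IsFiniteMeasure μ] (hX : AEMeasurable X μ) (hX0 : 0 ≤ X)
    {a : ℝ} (ha : 0 ≤ a) : Integrable (fun ω => Real.exp (-a * X ω)) μ :=
  .of_mem_Icc 0 1 (Real.measurable_exp.comp_aemeasurable (hX.const_mul _)) <|
    ae_of_all _ fun ω => ⟨(Real.exp_pos _).le,
      Real.exp_le_one_iff.mpr (by rw [neg_mul, neg_nonpos]; exact mul_nonneg ha (hX0 ω))⟩

theorem mgf_neg_le_exp_of_integrable_rpow [IsProbabilityMeasure μ] (hX : AEMeasurable X μ)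
    (hX0 : 0 ≤ X) (hp1 : 1 ≤ p) (hp2 : p ≤ 2) (hXp : Integrable (fun ω => X ω ^ p) μ)
    {a : ℝ} (ha : 0 ≤ a) :
    mgf X μ (-a) ≤ Real.exp (-(a * μ[X]) + a ^ p * μ[fun ω => X ω ^ p]) := by
  have hXint : Integrable X μ := integrable_of_integrable_rpow hX.aestronglyMeasurable hX0 hp1 hXp
  have hpoly : ∀ ω, Real.exp (-a * X ω) ≤ 1 - a * X ω + a ^ p * X ω ^ p := fun ω => by
    simpa [Real.mul_rpow ha (hX0 ω)] using
      Real.exp_neg_le_one_sub_add_rpow hp1 hp2 (mul_nonneg ha (hX0 ω))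
  have hlin_int : Integrable (fun ω => 1 - a * X ω) μ :=
    (integrable_const 1).sub (hXint.const_mul a)
  have hpow_int : Integrable (fun ω => a ^ p * X ω ^ p) μ := hXp.const_mul _
  calc mgf X μ (-a) ≤ μ[fun ω => 1 - a * X ω + a ^ p * X ω ^ p] :=
        integral_mono (integrable_exp_neg_mul_of_nonneg hX hX0 ha) (hlin_int.add hpow_int) hpoly
    _ = 1 + (-(a * μ[X]) + a ^ p * μ[fun ω => X ω ^ p]) := by
        rw [integral_add hlin_int hpow_int, integral_sub (integrable_const 1) (hXint.const_mul a),
          integral_const_mul, integral_const_mul, integral_const, probReal_univ, smul_eq_mul,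
          mul_one]
        ring
    _ ≤ _ := by linarith [Real.add_one_le_exp (-(a * μ[X]) + a ^ p * μ[fun ω => X ω ^ p])]

theorem measure_sum_le_le_exp_mul_pow {ι : Type*} {X : ι → α → ℝ} (hindep : iIndepFun X μ)
    (hX : ∀ i, Measurable (X i)) (s : Finset ι) {t b ε : ℝ} (ht : t ≤ 0)
    (hint : ∀ i ∈ s, Integrable (fun ω => Real.exp (t * X i ω)) μ)
    (hmgf : ∀ i ∈ s, mgf (X i) μ t ≤ b) :
    μ.real {ω | ∑ i ∈ s, X i ω ≤ ε} ≤ Real.exp (-t * ε) * b ^ s.card := by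
  have := hindep.isProbabilityMeasure
  have hchernoff := measure_le_le_exp_mul_mgf ε ht (hindep.integrable_exp_mul_sum hX hint)
  simp only [Finset.sum_apply, hindep.mgf_sum hX] at hchernoff
  refine hchernoff.trans (mul_le_mul_of_nonneg_left ?_ (Real.exp_pos _).le)
  exact (Finset.prod_le_prod (fun i _ => mgf_nonneg) hmgf).trans_eq (Finset.prod_const b)

end Moments

theorem Set.exists_mem_le_of_le_ncard {F : Set ℕ} {m : ℕ} (hF : F ⊆ Ici 1) (hm : 0 < m)
    (h : m ≤ F.ncard) : ∃ N ∈ F, m ≤ N := by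
  by_contra! hlt
  have hcard : F.ncard ≤ (Ico 1 m).ncard :=
    ncard_le_ncard (fun n hn => ⟨hF hn, hlt n hn⟩) (finite_Ico 1 m)
  rw [ncard_Ico_nat] at hcard
  omega

theorem renewalEpoch_le_of_le_renewalCount {α : Type*} {S0 : α → ℝ} {C : ℕ → α → ℝ} {T : ℝ}
    {ω : α} {m : ℕ} (hC : ∀ j, 0 ≤ C j ω) (hm : 0 < m) (h : m ≤ renewalCount S0 C T ω) :
    renewalEpoch S0 C m ω ≤ T := by
  obtain ⟨N, hN, hmN⟩ := exists_mem_le_of_le_ncard (fun n hn => hn.1) hm h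
  calc renewalEpoch S0 C m ω ≤ renewalEpoch S0 C N ω :=
        add_le_add_right (Finset.sum_le_sum_of_subset_of_nonneg (Finset.Icc_subset_Icc_right hmN)
          fun j _ _ => hC j) _
    _ ≤ T := hN.2

theorem measureReal_le_renewalCount_le {S0 : Ω → ℝ} {C : ℕ → Ω → ℝ} (hS0 : ∀ ω, 0 ≤ S0 ω)
    (hmeasC : ∀ j, Measurable (C j)) (hCpos : ∀ j ω, 0 ≤ C j ω) (hiid : iIndepFun C ℙ)
    {a ρ : ℝ} (ha : 0 ≤ a)
    (hmgf : ∀ j, 1 ≤ j → mgf (C j) ℙ (-a) ≤ Real.exp (-(a * ρ))) (T : ℝ) {m : ℕ} (hm : 0 < m) :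
    (ℙ : Measure Ω).real {ω | m ≤ renewalCount S0 C T ω} ≤ Real.exp (a * (T - m * ρ)) := by
  have := hiid.isProbabilityMeasure
  have hsub : {ω | m ≤ renewalCount S0 C T ω} ⊆ {ω | ∑ j ∈ Finset.Icc 1 m, C j ω ≤ T} :=
    fun ω hω =>
      (le_add_of_nonneg_left (hS0 ω)).trans (renewalEpoch_le_of_le_renewalCount (hCpos · ω) hm hω)
  calc (ℙ : Measure Ω).real {ω | m ≤ renewalCount S0 C T ω}
      ≤ (ℙ : Measure Ω).real {ω | ∑ j ∈ Finset.Icc 1 m, C j ω ≤ T} := measureReal_mono hsub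
    _ ≤ Real.exp (-(-a) * T) * Real.exp (-(a * ρ)) ^ (Finset.Icc 1 m).card :=
        measure_sum_le_le_exp_mul_pow hiid hmeasC _ (neg_nonpos.mpr ha)
          (fun j _ => integrable_exp_neg_mul_of_nonneg (hmeasC j).aemeasurable (hCpos j) ha)
          fun j hj => hmgf j (Finset.mem_Icc.mp hj).1
    _ = Real.exp (a * (T - m * ρ)) := by
        rw [Nat.card_Icc, add_tsub_cancel_right, ← Real.exp_nat_mul, ← Real.exp_add]
        ring_nf

theorem renewal_count_deviation_general
    [IsProbabilityMeasure (ℙ : Measure Ω)]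
    (S0 : Ω → ℝ) (C : ℕ → Ω → ℝ) (p μ : ℝ)
    (hp : 1 < p ∧ p < 2)
    (hS0 : ∀ ω, 0 ≤ S0 ω)
    (hmeasC : ∀ j, Measurable (C j))
    (hCpos : ∀ j ω, 0 ≤ C j ω)
    (hiid : iIndepFun C ℙ)
    (hident : ∀ j, 1 ≤ j → IdentDistrib (C j) (C 1) ℙ ℙ)
    (hmean : ∫ ω, C 1 ω ∂ℙ = μ) (hμ : 0 < μ)
    (hCp : Integrable (fun ω => C 1 ω ^ p) ℙ) :
    ∃ c : ℝ, 0 < c ∧ ∀ T : ℝ, 0 < T →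
      (ℙ {ω | 2 * T / μ < (renewalCount S0 C T ω : ℝ)}).toReal ≤ c * T ^ (1 - p) := by
  obtain ⟨hp1, hp2⟩ := hp
  obtain ⟨a, ha, haK⟩ := exists_pos_rpow_mul_le (sub_pos.mpr hp1) (by positivity : 0 < μ / 4)
    (∫ ω, C 1 ω ^ p ∂ℙ)
  have hmgf : ∀ j, 1 ≤ j → mgf (C j) ℙ (-a) ≤ Real.exp (-(a * (3 / 4 * μ))) := fun j hj => by
    rw [mgf_congr_of_identDistrib _ _ (hident j hj)]
    refine (mgf_neg_le_exp_of_integrable_rpow (hmeasC 1).aemeasurable (hCpos 1) hp1.le hp2.le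
      hCp ha.le).trans (Real.exp_le_exp.mpr ?_)
    have hap : a ^ p = a * a ^ (p - 1) := by
      rw [Real.rpow_sub_one ha.ne']
      field_simp
    beta_reduce
    rw [hmean, hap]
    nlinarith [mul_le_mul_of_nonneg_left haK ha.le]
  refine ⟨(a / 2) ^ (1 - p), by positivity, fun T hT => ?_⟩
  set m := ⌊2 * T / μ⌋₊ + 1 with hm_def
  have hm : 2 * T < m * μ := by
    rw [← div_lt_iff₀ hμ]
    exact_mod_cast Nat.lt_floor_add_one _
  calc (ℙ {ω | 2 * T / μ < (renewalCount S0 C T ω : ℝ)}).toReal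
      ≤ (ℙ : Measure Ω).real {ω | m ≤ renewalCount S0 C T ω} := measureReal_mono fun ω hω =>
        Nat.add_one_le_of_lt ((Nat.floor_lt (by positivity)).mpr hω)
    _ ≤ Real.exp (a * (T - m * (3 / 4 * μ))) :=
        measureReal_le_renewalCount_le hS0 hmeasC hCpos hiid ha.le hmgf T (by omega)
    _ ≤ Real.exp (-(a / 2 * T)) := Real.exp_le_exp.mpr (by nlinarith)
    _ ≤ (a / 2 * T) ^ (-(p - 1)) :=
        Real.exp_neg_le_rpow_neg (by positivity) (by linarith) (by linarith)
    _ = (a / 2) ^ (1 - p) * T ^ (1 - p) := by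
        rw [neg_sub, Real.mul_rpow (by positivity) hT.le]

/-- For a renewal process with i.i.d. interarrival times `C_j ≥ 0` with
mean `μ > 0` and `E[C_1^p] < ∞` for some `p ∈ (1,2)`, there is a constant `c` such that
`P(M_T > 2T/μ) ≤ c T^{1−p}` for all `T > 0`. -/
theorem renewal_count_deviation
    [IsProbabilityMeasure (ℙ : Measure Ω)]
    (S0 : Ω → ℝ) (C : ℕ → Ω → ℝ) (p μ : ℝ)
    (hp : 1 < p ∧ p < 2)
    (hmeasS0 : Measurable S0) (hS0 : ∀ ω, 0 ≤ S0 ω)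
    (hmeasC : ∀ j, Measurable (C j))
    (hCpos : ∀ j ω, 0 ≤ C j ω)
    (hiid : iIndepFun C ℙ)
    (hident : ∀ j, 1 ≤ j → IdentDistrib (C j) (C 1) ℙ ℙ)
    (hmean : ∫ ω, C 1 ω ∂ℙ = μ) (hμ : 0 < μ)
    (hCp : Integrable (fun ω => C 1 ω ^ p) ℙ) :
    ∃ c : ℝ, 0 < c ∧ ∀ T : ℝ, 0 < T →
      (ℙ {ω | 2 * T / μ < (renewalCount S0 C T ω : ℝ)}).toReal ≤ c * T ^ (1 - p) :=
  renewal_count_deviation_general S0 C p μ hp hS0 hmeasC hCpos hiid hident hmean hμ hCp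
end
end

section
/- For real-valued càdlàg functions x_1, x_2 on [a,c] and a < b < c, the Skorohod M_1 distance satisfies d_{M_1}(x_1, x_2, [a,c]) ≤ max( d_{M_1}(x_1, x_2, [a,b]), d_{M_1}(x_1, x_2, [b,c]) ). -/
/-!
Given parametric representations of `x₁, x₂` on `[a,b]` and on `[b,c]` that stay within
distances `r₁` and `r₂` of each other, run each pair one after the other at double speed: both
pieces pass through `(b, xᵢ b)` at the junction, so this yields parametric representations on
`[a,c]` within distance `max r₁ r₂`, and taking infima gives the inequality.

If no bound is admissible on `[a,c]`, the left side is `sInf ∅ = 0`. Otherwise, taking infima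
needs admissible bounds on `[a,b]` and `[b,c]` as well: a parametric representation on `[a,c]`
passes through `(b, x b)` at some time `σ`, and its restrictions to `[0,σ]` and `[σ,1]`,
reparametrised affinely, represent the completed graphs on `[a,b]` and `[b,c]`.
-/

open Filter Set Function

noncomputable section

/-- The left-limit value of `x` used at time `t` of the interval `[a,b]` (at the left
endpoint `a` no jump is recorded). -/
def m1Left (x : ℝ → ℝ) (a t : ℝ) : ℝ := if t = a then x a else leftLim x t

/-- The completed graph of `x` over `[a,b]`: the graph together with the vertical
segments joining `x(t−)` to `x(t)` at jump times. -/
def completedGraph (x : ℝ → ℝ) (a b : ℝ) : Set (ℝ × ℝ) :=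
  {p : ℝ × ℝ | p.1 ∈ Set.Icc a b ∧ p.2 ∈ Set.uIcc (m1Left x a p.1) (x p.1)}

/-- The order on the completed graph used to define parametric representations:
points are compared first by time, and at a common time by how far along the jump
segment (starting from the left limit) they lie. -/
def graphLE (x : ℝ → ℝ) (a : ℝ) (p q : ℝ × ℝ) : Prop :=
  p.1 < q.1 ∨ (p.1 = q.1 ∧ |p.2 - m1Left x a p.1| ≤ |q.2 - m1Left x a q.1|)

/-- A parametric representation of the completed graph of `x` on `[a,b]`: a continuous
nondecreasing (for the graph order) map from `[0,1]` onto the completed graph. -/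
def IsParamRep (x : ℝ → ℝ) (a b : ℝ) (u : ℝ → ℝ × ℝ) : Prop :=
  ContinuousOn u (Set.Icc 0 1) ∧ u '' Set.Icc 0 1 = completedGraph x a b ∧
    ∀ s t : ℝ, s ∈ Set.Icc (0:ℝ) 1 → t ∈ Set.Icc (0:ℝ) 1 → s ≤ t →
      graphLE x a (u s) (u t)

/-- The Skorohod `M_1` distance between `x₁` and `x₂` on the interval `[a,b]`, defined
as the infimum over parametric representations of the uniform distance between them. -/
def m1Dist (x₁ x₂ : ℝ → ℝ) (a b : ℝ) : ℝ :=
  sInf {r : ℝ | ∃ u₁ u₂ : ℝ → ℝ × ℝ, IsParamRep x₁ a b u₁ ∧ IsParamRep x₂ a b u₂ ∧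
    ∀ t ∈ Set.Icc (0:ℝ) 1,
      max |(u₁ t).1 - (u₂ t).1| |(u₁ t).2 - (u₂ t).2| ≤ r}

/-- A function is càdlàg on `[a,b]`: right-continuous with left limits. -/
def IsCadlagOn (x : ℝ → ℝ) (a b : ℝ) : Prop :=
  (∀ t ∈ Set.Ico a b, ContinuousWithinAt x (Set.Ici t) t) ∧
    ∀ t ∈ Set.Ioc a b, Tendsto x (nhdsWithin t (Set.Iio t)) (nhds (leftLim x t))

lemma csInf_le_max_csInf_of_forall_max_mem {α : Type*} [ConditionallyCompleteLinearOrder α]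
    {S T U : Set α} (hS : S.Nonempty) (hT : T.Nonempty) (hU : BddBelow U)
    (h : ∀ r ∈ S, ∀ r' ∈ T, max r r' ∈ U) : sInf U ≤ max (sInf S) (sInf T) := by
  by_contra! hlt
  obtain ⟨r, hr, hrU⟩ := exists_lt_of_csInf_lt hS ((le_max_left _ _).trans_lt hlt)
  obtain ⟨r', hr', hr'U⟩ := exists_lt_of_csInf_lt hT ((le_max_right _ _).trans_lt hlt)
  exact (csInf_le hU (h r hr r' hr')).not_gt (max_lt hrU hr'U)

lemma eq_right_of_mem_uIcc_of_abs_sub_le {u v y : ℝ} (hy : y ∈ uIcc u v)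
    (h : |v - u| ≤ |y - u|) : y = v := by
  rcases le_total u v with huv | hvu
  · rw [uIcc_of_le huv] at hy
    rw [abs_of_nonneg (sub_nonneg.2 huv), abs_of_nonneg (sub_nonneg.2 hy.1)] at h
    linarith [hy.2]
  · rw [uIcc_of_ge hvu] at hy
    rw [abs_of_nonpos (sub_nonpos.2 hvu), abs_of_nonpos (sub_nonpos.2 hy.2)] at h
    linarith [hy.1]

section CompletedGraph

variable {x : ℝ → ℝ} {a b c t : ℝ} {p q : ℝ × ℝ}

lemma m1Left_self : m1Left x a a = x a := if_pos rfl

lemma m1Left_eq_of_le_of_lt (hab : a ≤ b) (hbt : b < t) : m1Left x a t = m1Left x b t := by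
  simp only [m1Left, if_neg (hab.trans_lt hbt).ne', if_neg hbt.ne']

lemma graphLE.fst_le (h : graphLE x a p q) : p.1 ≤ q.1 :=
  h.elim le_of_lt fun h => h.1.le

lemma mk_mem_completedGraph (ht : t ∈ Icc a b) : (t, x t) ∈ completedGraph x a b :=
  ⟨ht, right_mem_uIcc⟩

lemma eq_of_mem_completedGraph_of_fst_eq (hp : p ∈ completedGraph x a b) (h : p.1 = a) :
    p = (a, x a) := by
  obtain ⟨p₁, p₂⟩ := p
  obtain rfl : p₁ = a := h
  have hp₂ := hp.2
  simp only [m1Left_self, uIcc_self, mem_singleton_iff] at hp₂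
  rw [hp₂]

lemma eq_of_mem_completedGraph_of_mem (h₁ : p ∈ completedGraph x a b)
    (h₂ : p ∈ completedGraph x b c) : p = (b, x b) :=
  eq_of_mem_completedGraph_of_fst_eq h₂ (le_antisymm h₁.1.2 h₂.1.1)

lemma completedGraph_union (hab : a ≤ b) (hbc : b ≤ c) :
    completedGraph x a b ∪ completedGraph x b c = completedGraph x a c := by
  ext p
  constructor
  · rintro (hp | hp)
    · exact ⟨⟨hp.1.1, hp.1.2.trans hbc⟩, hp.2⟩
    · rcases hp.1.1.eq_or_lt with hb | hb
      · rw [eq_of_mem_completedGraph_of_fst_eq hp hb.symm]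
        exact mk_mem_completedGraph ⟨hab, hbc⟩
      · exact ⟨⟨hab.trans hp.1.1, hp.1.2⟩, m1Left_eq_of_le_of_lt hab hb ▸ hp.2⟩
  · rintro ⟨⟨hap, hpc⟩, hp⟩
    rcases le_or_gt p.1 b with hpb | hbp
    · exact Or.inl ⟨⟨hap, hpb⟩, hp⟩
    · exact Or.inr ⟨⟨hbp.le, hpc⟩, m1Left_eq_of_le_of_lt hab hbp ▸ hp⟩

lemma graphLE_congr_of_mem (hab : a ≤ b) (hp : p ∈ completedGraph x b c)
    (hq : q ∈ completedGraph x b c) : graphLE x a p q ↔ graphLE x b p q := by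
  refine or_congr_right (and_congr_right fun hpq => ?_)
  rcases hp.1.1.eq_or_lt with hb | hb
  · rw [eq_of_mem_completedGraph_of_fst_eq hp hb.symm,
      eq_of_mem_completedGraph_of_fst_eq hq (hb.trans hpq).symm]
    simp only [le_refl]
  · rw [← hpq, m1Left_eq_of_le_of_lt hab hb]

lemma graphLE_of_mem_of_mem (hp : p ∈ completedGraph x a b) (hq : q ∈ completedGraph x b c) :
    graphLE x a p q := by
  rcases (hp.1.2.trans hq.1.1).lt_or_eq with hlt | heq
  · exact Or.inl hlt
  · have hpb : p.1 = b := le_antisymm hp.1.2 (heq ▸ hq.1.1)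
    refine Or.inr ⟨heq, ?_⟩
    rw [eq_of_mem_completedGraph_of_fst_eq hq (heq.symm.trans hpb), ← hpb]
    exact abs_sub_left_of_mem_uIcc hp.2

lemma eq_of_graphLE_of_fst_le (hq : q ∈ completedGraph x a b) (hle : graphLE x a (t, x t) q)
    (hqt : q.1 ≤ t) : q = (t, x t) := by
  rcases hle with hlt | ⟨heq, habs⟩
  · exact absurd hlt hqt.not_gt
  · obtain ⟨q₁, q₂⟩ := q
    obtain rfl : t = q₁ := heq
    exact Prod.ext rfl (eq_right_of_mem_uIcc_of_abs_sub_le hq.2 habs)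

lemma mem_completedGraph_of_graphLE (hab : a ≤ b) (hq : q ∈ completedGraph x a c)
    (hle : graphLE x a (b, x b) q) : q ∈ completedGraph x b c := by
  rcases lt_or_ge b q.1 with hbq | hqb
  · exact ⟨⟨hbq.le, hq.1.2⟩, m1Left_eq_of_le_of_lt hab hbq ▸ hq.2⟩
  · rw [eq_of_graphLE_of_fst_le hq hle hqb]
    exact mk_mem_completedGraph ⟨le_rfl, hle.fst_le.trans hq.1.2⟩

end CompletedGraph

section ParamRep

variable {x : ℝ → ℝ} {a b c : ℝ} {u v w : ℝ → ℝ × ℝ}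

lemma isParamRep_comp_lineMap {s₀ s₁ : ℝ} (hs₀₁ : s₀ ≤ s₁) (hcont : ContinuousOn u (Icc s₀ s₁))
    (himg : u '' Icc s₀ s₁ = completedGraph x a b)
    (hmono : ∀ s ∈ Icc s₀ s₁, ∀ t ∈ Icc s₀ s₁, s ≤ t → graphLE x a (u s) (u t)) :
    IsParamRep x a b (u ∘ AffineMap.lineMap s₀ s₁) := by
  have hline : AffineMap.lineMap s₀ s₁ '' Icc (0:ℝ) 1 = Icc s₀ s₁ := by
    rw [← segment_eq_image_lineMap, segment_eq_Icc hs₀₁]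
  have hmaps : MapsTo (AffineMap.lineMap s₀ s₁) (Icc (0:ℝ) 1) (Icc s₀ s₁) :=
    hline ▸ mapsTo_image _ _
  exact ⟨hcont.comp AffineMap.lineMap_continuous.continuousOn hmaps,
    by rw [image_comp, hline, himg],
    fun s t hs ht hst => hmono _ (hmaps hs) _ (hmaps ht) (AffineMap.lineMap_mono hs₀₁ hst)⟩

namespace IsParamRep

lemma mem (hu : IsParamRep x a b u) {s : ℝ} (hs : s ∈ Icc (0:ℝ) 1) :
    u s ∈ completedGraph x a b :=
  hu.2.1 ▸ mem_image_of_mem u hs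

lemma exists_eq (hu : IsParamRep x a b u) {p : ℝ × ℝ} (hp : p ∈ completedGraph x a b) :
    ∃ s ∈ Icc (0:ℝ) 1, u s = p := by
  rwa [← hu.2.1] at hp

lemma apply_zero (hab : a ≤ b) (hu : IsParamRep x a b u) : u 0 = (a, x a) := by
  obtain ⟨s, hs, hus⟩ := hu.exists_eq (mk_mem_completedGraph ⟨le_rfl, hab⟩)
  have h₀ : (0:ℝ) ∈ Icc (0:ℝ) 1 := ⟨le_rfl, zero_le_one⟩
  have hfst := (hu.2.2 0 s h₀ hs hs.1).fst_le
  rw [hus] at hfst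
  exact eq_of_mem_completedGraph_of_fst_eq (hu.mem h₀) (le_antisymm hfst (hu.mem h₀).1.1)

lemma apply_one (hab : a ≤ b) (hu : IsParamRep x a b u) : u 1 = (b, x b) := by
  obtain ⟨s, hs, hus⟩ := hu.exists_eq (mk_mem_completedGraph ⟨hab, le_rfl⟩)
  have h₁ : (1:ℝ) ∈ Icc (0:ℝ) 1 := ⟨zero_le_one, le_rfl⟩
  have hle := hu.2.2 s 1 hs h₁ hs.2
  rw [hus] at hle
  exact eq_of_graphLE_of_fst_le (hu.mem h₁) hle (hu.mem h₁).1.2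

lemma exists_image_Icc_eq (hab : a ≤ b) (hbc : b ≤ c) (hu : IsParamRep x a c u) :
    ∃ σ ∈ Icc (0:ℝ) 1,
      u '' Icc 0 σ = completedGraph x a b ∧ u '' Icc σ 1 = completedGraph x b c := by
  obtain ⟨σ, hσ, huσ⟩ := hu.exists_eq (mk_mem_completedGraph ⟨hab, hbc⟩)
  have hbefore : MapsTo u (Icc 0 σ) (completedGraph x a b) := fun s hs => by
    have hs₁ : s ∈ Icc (0:ℝ) 1 := ⟨hs.1, hs.2.trans hσ.2⟩
    have hfst := (hu.2.2 s σ hs₁ hσ hs.2).fst_le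
    rw [huσ] at hfst
    exact ⟨⟨(hu.mem hs₁).1.1, hfst⟩, (hu.mem hs₁).2⟩
  have hafter : MapsTo u (Icc σ 1) (completedGraph x b c) := fun s hs => by
    have hs₁ : s ∈ Icc (0:ℝ) 1 := ⟨hσ.1.trans hs.1, hs.2⟩
    have hle := hu.2.2 σ s hσ hs₁ hs.1
    rw [huσ] at hle
    exact mem_completedGraph_of_graphLE hab (hu.mem hs₁) hle
  refine ⟨σ, hσ, hbefore.image_subset.antisymm fun p hp => ?_,
    hafter.image_subset.antisymm fun p hp => ?_⟩
  · obtain ⟨s, hs, rfl⟩ := hu.exists_eq ((completedGraph_union hab hbc).subset (Or.inl hp))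
    rcases le_total s σ with hsσ | hσs
    · exact ⟨s, ⟨hs.1, hsσ⟩, rfl⟩
    · refine ⟨σ, ⟨hσ.1, le_rfl⟩, ?_⟩
      rw [huσ, eq_of_mem_completedGraph_of_mem hp (hafter ⟨hσs, hs.2⟩)]
  · obtain ⟨s, hs, rfl⟩ := hu.exists_eq ((completedGraph_union hab hbc).subset (Or.inr hp))
    rcases le_total σ s with hσs | hsσ
    · exact ⟨s, ⟨hσs, hs.2⟩, rfl⟩
    · refine ⟨σ, ⟨le_rfl, hσ.2⟩, ?_⟩
      rw [huσ, eq_of_mem_completedGraph_of_mem (hbefore ⟨hs.1, hsσ⟩) hp]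

lemma exists_restrict (hab : a ≤ b) (hbc : b ≤ c) (hu : IsParamRep x a c u) :
    (∃ v, IsParamRep x a b v) ∧ ∃ w, IsParamRep x b c w := by
  obtain ⟨σ, hσ, himg₁, himg₂⟩ := hu.exists_image_Icc_eq hab hbc
  have hsub₁ : Icc 0 σ ⊆ Icc (0:ℝ) 1 := Icc_subset_Icc_right hσ.2
  have hsub₂ : Icc σ 1 ⊆ Icc (0:ℝ) 1 := Icc_subset_Icc_left hσ.1
  refine ⟨⟨_, isParamRep_comp_lineMap hσ.1 (hu.1.mono hsub₁) himg₁
    fun s hs t ht => hu.2.2 s t (hsub₁ hs) (hsub₁ ht)⟩,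
    ⟨_, isParamRep_comp_lineMap hσ.2 (hu.1.mono hsub₂) himg₂ fun s hs t ht hst => ?_⟩⟩
  rw [← graphLE_congr_of_mem hab (himg₂ ▸ mem_image_of_mem u hs)
    (himg₂ ▸ mem_image_of_mem u ht)]
  exact hu.2.2 s t (hsub₂ hs) (hsub₂ ht) hst

end IsParamRep

def paramConcat (v w : ℝ → ℝ × ℝ) (t : ℝ) : ℝ × ℝ :=
  if t ≤ 1/2 then v (2 * t) else w (2 * t - 1)

lemma eqOn_paramConcat_left : EqOn (paramConcat v w) (fun t => v (2 * t)) (Icc 0 (1/2)) :=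
  fun _ ht => if_pos ht.2

lemma eqOn_paramConcat_right (hvw : v 1 = w 0) :
    EqOn (paramConcat v w) (fun t => w (2 * t - 1)) (Icc (1/2) 1) := by
  intro t ht
  rcases ht.1.eq_or_lt with rfl | h
  · rw [paramConcat, if_pos le_rfl]
    norm_num [hvw]
  · exact if_neg h.not_ge

lemma image_two_mul_Icc : (fun t : ℝ => 2 * t) '' Icc 0 (1/2) = Icc 0 1 := by
  simpa using image_affine_Icc' (two_pos (α := ℝ)) 0 0 (1/2)

lemma image_two_mul_sub_one_Icc : (fun t : ℝ => 2 * t - 1) '' Icc (1/2) 1 = Icc 0 1 := by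
  have h := image_affine_Icc' (two_pos (α := ℝ)) (-1) (1/2) 1
  norm_num [← sub_eq_add_neg] at h
  exact h

lemma IsParamRep.concat (hab : a ≤ b) (hbc : b ≤ c) (hv : IsParamRep x a b v)
    (hw : IsParamRep x b c w) : IsParamRep x a c (paramConcat v w) := by
  have hL : EqOn (paramConcat v w) _ _ := eqOn_paramConcat_left
  have hR : EqOn (paramConcat v w) _ _ :=
    eqOn_paramConcat_right ((hv.apply_one hab).trans (hw.apply_zero hbc).symm)
  have hmapsL : MapsTo (fun t : ℝ => 2 * t) (Icc 0 (1/2)) (Icc 0 1) :=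
    image_two_mul_Icc ▸ mapsTo_image _ _
  have hmapsR : MapsTo (fun t : ℝ => 2 * t - 1) (Icc (1/2) 1) (Icc 0 1) :=
    image_two_mul_sub_one_Icc ▸ mapsTo_image _ _
  have hsplit : Icc (0:ℝ) 1 = Icc 0 (1/2) ∪ Icc (1/2) 1 :=
    (Icc_union_Icc_eq_Icc (by norm_num) (by norm_num)).symm
  refine ⟨?_, ?_, fun s t hs ht hst => ?_⟩
  · rw [hsplit]
    exact ContinuousOn.union_of_isClosed
      ((hv.1.comp (continuous_const_mul 2).continuousOn hmapsL).congr hL)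
      ((hw.1.comp ((continuous_const_mul 2).sub continuous_const).continuousOn hmapsR).congr hR)
      isClosed_Icc isClosed_Icc
  · have himgL : (fun t => v (2 * t)) '' Icc 0 (1/2) = completedGraph x a b := by
      rw [← hv.2.1, ← image_two_mul_Icc, image_image]
    have himgR : (fun t => w (2 * t - 1)) '' Icc (1/2) 1 = completedGraph x b c := by
      rw [← hw.2.1, ← image_two_mul_sub_one_Icc, image_image]
    rw [hsplit, image_union, hL.image_eq, hR.image_eq, himgL, himgR,
      completedGraph_union hab hbc]
  rcases le_total t (1/2) with ht₂ | ht₂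
  · rw [hL ⟨hs.1, hst.trans ht₂⟩, hL ⟨ht.1, ht₂⟩]
    exact hv.2.2 _ _ (hmapsL ⟨hs.1, hst.trans ht₂⟩) (hmapsL ⟨ht.1, ht₂⟩) (by linarith)
  rcases le_total s (1/2) with hs₂ | hs₂
  · rw [hL ⟨hs.1, hs₂⟩, hR ⟨ht₂, ht.2⟩]
    exact graphLE_of_mem_of_mem (hv.mem (hmapsL ⟨hs.1, hs₂⟩)) (hw.mem (hmapsR ⟨ht₂, ht.2⟩))
  · rw [hR ⟨hs₂, hs.2⟩, hR ⟨ht₂, ht.2⟩,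
      graphLE_congr_of_mem hab (hw.mem (hmapsR ⟨hs₂, hs.2⟩)) (hw.mem (hmapsR ⟨ht₂, ht.2⟩))]
    exact hw.2.2 _ _ (hmapsR ⟨hs₂, hs.2⟩) (hmapsR ⟨ht₂, ht.2⟩) (by linarith)

end ParamRep

def m1Bounds (x₁ x₂ : ℝ → ℝ) (a b : ℝ) : Set ℝ :=
  {r : ℝ | ∃ u₁ u₂ : ℝ → ℝ × ℝ, IsParamRep x₁ a b u₁ ∧ IsParamRep x₂ a b u₂ ∧
    ∀ t ∈ Set.Icc (0:ℝ) 1, max |(u₁ t).1 - (u₂ t).1| |(u₁ t).2 - (u₂ t).2| ≤ r}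

section M1Bounds

variable {x₁ x₂ : ℝ → ℝ} {a b c r r' : ℝ}

lemma m1Dist_eq_sInf_m1Bounds : m1Dist x₁ x₂ a b = sInf (m1Bounds x₁ x₂ a b) := rfl

lemma nonneg_of_mem_m1Bounds (hr : r ∈ m1Bounds x₁ x₂ a b) : 0 ≤ r := by
  obtain ⟨u₁, u₂, -, -, hbound⟩ := hr
  exact (abs_nonneg _).trans ((le_max_left _ _).trans (hbound 0 ⟨le_rfl, zero_le_one⟩))

lemma m1Dist_nonneg : 0 ≤ m1Dist x₁ x₂ a b :=
  Real.sInf_nonneg fun _ => nonneg_of_mem_m1Bounds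

lemma m1Bounds_nonempty {u₁ u₂ : ℝ → ℝ × ℝ} (h₁ : IsParamRep x₁ a b u₁)
    (h₂ : IsParamRep x₂ a b u₂) : (m1Bounds x₁ x₂ a b).Nonempty := by
  have hcont : ContinuousOn (fun t => max |(u₁ t).1 - (u₂ t).1| |(u₁ t).2 - (u₂ t).2|)
      (Icc 0 1) := by
    have := h₁.1; have := h₂.1; fun_prop
  obtain ⟨t₀, -, hmax⟩ := isCompact_Icc.exists_isMaxOn (nonempty_Icc.2 zero_le_one) hcont
  exact ⟨_, u₁, u₂, h₁, h₂, fun t ht => hmax ht⟩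

lemma m1Bounds_nonempty_of_subinterval (hab : a ≤ b) (hbc : b ≤ c)
    (h : (m1Bounds x₁ x₂ a c).Nonempty) :
    (m1Bounds x₁ x₂ a b).Nonempty ∧ (m1Bounds x₁ x₂ b c).Nonempty := by
  obtain ⟨-, u₁, u₂, hu₁, hu₂, -⟩ := h
  obtain ⟨⟨v₁, hv₁⟩, ⟨w₁, hw₁⟩⟩ := hu₁.exists_restrict hab hbc
  obtain ⟨⟨v₂, hv₂⟩, ⟨w₂, hw₂⟩⟩ := hu₂.exists_restrict hab hbc
  exact ⟨m1Bounds_nonempty hv₁ hv₂, m1Bounds_nonempty hw₁ hw₂⟩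

lemma max_mem_m1Bounds (hab : a ≤ b) (hbc : b ≤ c) (hr : r ∈ m1Bounds x₁ x₂ a b)
    (hr' : r' ∈ m1Bounds x₁ x₂ b c) : max r r' ∈ m1Bounds x₁ x₂ a c := by
  obtain ⟨v₁, v₂, hv₁, hv₂, hv⟩ := hr
  obtain ⟨w₁, w₂, hw₁, hw₂, hw⟩ := hr'
  refine ⟨paramConcat v₁ w₁, paramConcat v₂ w₂, hv₁.concat hab hbc hw₁,
    hv₂.concat hab hbc hw₂, fun t ht => ?_⟩
  unfold paramConcat
  split_ifs with h
  · exact (hv _ ⟨by linarith [ht.1], by linarith⟩).trans (le_max_left _ _)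
  · exact (hw _ ⟨by linarith, by linarith [ht.2]⟩).trans (le_max_right _ _)

end M1Bounds

theorem m1Dist_glue_general (x₁ x₂ : ℝ → ℝ) (a b c : ℝ) (hab : a < b) (hbc : b < c) :
    m1Dist x₁ x₂ a c ≤ max (m1Dist x₁ x₂ a b) (m1Dist x₁ x₂ b c) := by
  rcases (m1Bounds x₁ x₂ a c).eq_empty_or_nonempty with hempty | hne
  · rw [m1Dist_eq_sInf_m1Bounds, hempty, Real.sInf_empty]
    exact le_max_of_le_left m1Dist_nonneg
  obtain ⟨hne₁, hne₂⟩ := m1Bounds_nonempty_of_subinterval hab.le hbc.le hne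
  exact csInf_le_max_csInf_of_forall_max_mem hne₁ hne₂ ⟨0, fun _ => nonneg_of_mem_m1Bounds⟩
    fun r hr r' hr' => max_mem_m1Bounds hab.le hbc.le hr hr'

/-- For càdlàg functions `x₁, x₂` on `[a,c]` and `a < b < c`, the
`M₁` distance satisfies
`d_{M₁}(x₁,x₂,[a,c]) ≤ max(d_{M₁}(x₁,x₂,[a,b]), d_{M₁}(x₁,x₂,[b,c]))`. -/
theorem m1Dist_glue (x₁ x₂ : ℝ → ℝ) (a b c : ℝ) (hab : a < b) (hbc : b < c)
    (h₁ : IsCadlagOn x₁ a c) (h₂ : IsCadlagOn x₂ a c) :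
    m1Dist x₁ x₂ a c ≤ max (m1Dist x₁ x₂ a b) (m1Dist x₁ x₂ b c) :=
  m1Dist_glue_general x₁ x₂ a b c hab hbc
end
end
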